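/- Let $G$ be a non-abelian split metacyclic $2$-group with cyclic center. Then $G$ is absolutely split; that is, there is a normal cyclic subgroup $\langle a\rangle$ with cyclic complement such that for every $x \in G$ with $\langle x\rangle \cap \langle a\rangle = 1$, there exists $y \in G$ with $x \in \langle y\rangle$ and $G = \langle a\rangle \rtimes \langle y\rangle$. -/

import Mathlib

/-!
Write `G = ⟨a⟩ ⋊ ⟨b⟩` with `|a| = 2^m`, `|b| = 2^n` and `b a b⁻¹ = a^r`, `r` odd. The
involution `a^(2^(m-1))` is central, and a cyclic center has only one involution, so
`b^(2^(n-1))` does not centralise `a`: `r^(2^(n-1)) ≢ 1 (mod 2^m)`.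

Given `x = a^c b^(2^v u)` with `u` odd, `v < n` and `⟨x⟩ ∩ ⟨a⟩ = 1`, we look for a `2^v`-th root
`y = a^s b^u` of `x`, i.e. for a solution of `s (1 + ρ + ⋯ + ρ^(2^v - 1)) ≡ c (mod 2^m)` with
`ρ = r^u`. The condition `x^(2^(n-v)) = 1` bounds the 2-adic valuation of `c` from below, the
faithfulness above bounds that of the geometric sum from above, so the congruence is solvable.
Every such `y` works: `b^u` generates `⟨b⟩`, and `y^(2^n) = x^(2^(n-v))` lies in
`⟨x⟩ ∩ ⟨a⟩ = 1`, so `⟨y⟩ ∩ ⟨a⟩ = 1`.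
-/

open Finset Subgroup

theorem Int.four_dvd_sq_sub_one_of_odd {ρ : ℤ} (hρ : Odd ρ) : 4 ∣ ρ ^ 2 - 1 := by
  obtain ⟨t, rfl⟩ := hρ
  exact ⟨t * t + t, by ring⟩

theorem geom_sum_range_two_mul {R : Type*} [CommSemiring R] (x : R) (k : ℕ) :
    ∑ i ∈ range (2 * k), x ^ i = (1 + x) * ∑ i ∈ range k, (x ^ 2) ^ i := by
  induction k with
  | zero => simp
  | succ k ih =>
    rw [mul_add_one, sum_range_succ, sum_range_succ, ih, sum_range_succ, ← pow_mul]
    ring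

theorem exists_odd_geom_sum_two_pow {σ : ℤ} (hσ : 4 ∣ σ - 1) (k : ℕ) :
    ∃ w, Odd w ∧ ∑ i ∈ range (2 ^ k), σ ^ i = 2 ^ k * w := by
  induction k generalizing σ with
  | zero => exact ⟨1, odd_one, by simp⟩
  | succ k ih =>
    obtain ⟨t, ht⟩ := hσ
    obtain ⟨w, hw, hsum⟩ := ih (σ := σ ^ 2) ⟨t * (σ + 1), by linear_combination (σ + 1) * ht⟩
    refine ⟨(2 * t + 1) * w, (odd_two_mul_add_one t).mul hw, ?_⟩
    rw [pow_succ, mul_comm, geom_sum_range_two_mul, hsum]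
    linear_combination 2 ^ k * w * ht

theorem exists_odd_geom_sum_two_pow_succ {ρ : ℤ} (hρ : Odd ρ) (k : ℕ) :
    ∃ w, Odd w ∧ ∑ i ∈ range (2 ^ (k + 1)), ρ ^ i = (1 + ρ) * 2 ^ k * w := by
  obtain ⟨w, hw, hsum⟩ := exists_odd_geom_sum_two_pow (Int.four_dvd_sq_sub_one_of_odd hρ) k
  exact ⟨w, hw, by rw [pow_succ, mul_comm, geom_sum_range_two_mul, hsum, mul_assoc]⟩

theorem exists_mul_sub_dvd_of_not_dvd {R : Type*} [CommRing R] [IsDomain R] [IsBezout R]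
    [GCDMonoid R] {p : R} (hp : Prime p) {A c : R} {k m : ℕ}
    (hA : ¬ p ^ m ∣ A * p ^ k) (hc : p ^ m ∣ c * p ^ k) : ∃ s, p ^ m ∣ s * A - c := by
  obtain ⟨t, -, ht⟩ := (dvd_prime_pow hp m).mp (gcd_dvd_right A (p ^ m))
  have htk : t + k < m := by
    by_contra! h
    apply hA
    calc p ^ m ∣ p ^ (t + k) := pow_dvd_pow p h
      _ ∣ A * p ^ k := by
        rw [pow_add]
        exact mul_dvd_mul_right (ht.symm.dvd.trans (gcd_dvd_left A _)) _
  have hcm : p ^ (m - k) ∣ c := by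
    rwa [← mul_dvd_mul_iff_right (pow_ne_zero k hp.ne_zero), ← pow_add,
      Nat.sub_add_cancel (by omega)]
  have hgcd : gcd A (p ^ m) ∣ c := ht.dvd.trans ((pow_dvd_pow p (by omega)).trans hcm)
  obtain ⟨x, y, hxy⟩ := (gcd_dvd_iff_exists A (p ^ m)).mp hgcd
  exact ⟨x, -y, by rw [hxy]; ring⟩

theorem exists_mul_geom_sum_sub_dvd {ρ c : ℤ} {m n v : ℕ} (hρ : Odd ρ) (hv : v < n)
    (hρn : ¬ 2 ^ m ∣ ρ ^ 2 ^ (n - 1) - 1)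
    (hc : 2 ^ m ∣ c * ∑ i ∈ range (2 ^ (n - v)), (ρ ^ 2 ^ v) ^ i) :
    ∃ s, 2 ^ m ∣ s * ∑ i ∈ range (2 ^ v), ρ ^ i - c := by
  cases v with
  | zero => exact ⟨c, by simp⟩
  | succ v =>
    obtain ⟨k, rfl⟩ : ∃ k, n = v + 1 + (k + 1) := ⟨n - v - 2, by omega⟩
    rw [show v + 1 + (k + 1) - 1 = v + k + 1 by omega] at hρn
    rw [show v + 1 + (k + 1) - (v + 1) = k + 1 by omega] at hc
    have hodd {w : ℤ} (hw : Odd w) : IsCoprime ((2 : ℤ) ^ m) w :=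
      (Int.isCoprime_two_left.mpr hw).pow_left
    have h4 : (4 : ℤ) ∣ ρ ^ 2 ^ (v + 1) - 1 :=
      (Int.four_dvd_sq_sub_one_of_odd hρ).trans
        (dvd_pow_sub_one_of_dvd (dvd_pow_self 2 v.succ_ne_zero))
    obtain ⟨w, hw, hT⟩ := exists_odd_geom_sum_two_pow_succ hρ v
    obtain ⟨w', hw', hT'⟩ := exists_odd_geom_sum_two_pow h4 (k + 1)
    obtain ⟨w'', -, hV⟩ := exists_odd_geom_sum_two_pow_succ hρ (v + k)
    obtain ⟨t, ht⟩ := hρ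
    refine exists_mul_sub_dvd_of_not_dvd Int.prime_two (k := k + 1) (fun h => hρn ?_) ?_
    · -- `h` and `ρ ^ 2 ^ (v + k + 1) - 1` both involve `(1 + ρ) * 2 ^ (v + k + 1)`, the former
      -- up to the odd factor `w`
      have h' : 2 ^ m ∣ w * ((1 + ρ) * 2 ^ (v + k + 1)) := by
        rw [hT] at h
        exact h.trans (dvd_of_eq (by ring))
      rw [← geom_sum_mul, hV]
      exact ((hodd hw).dvd_of_dvd_mul_left h').trans ⟨w'' * t, by rw [ht]; ring⟩
    · rw [hT', ← mul_assoc] at hc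
      exact (hodd hw').dvd_of_dvd_mul_right hc

theorem IsCyclic.eq_of_orderOf_eq_two {α : Type*} [Group α] [IsCyclic α] [Finite α] {x y : α}
    (hx : orderOf x = 2) (hy : orderOf y = 2) : x = y := by
  classical
  have := Fintype.ofFinite α
  have hcard := IsCyclic.card_orderOf_eq_totient (α := α) (hx ▸ orderOf_dvd_card)
  rw [Nat.totient_two] at hcard
  exact Finset.card_le_one.mp hcard.le x (by simpa using hx) y (by simpa using hy)

theorem mul_comm_of_zpowers_eq_top {G : Type*} [Group G] {g : G} (hg : zpowers g = ⊤)
    (x y : G) : x * y = y * x := by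
  obtain ⟨i, rfl⟩ := mem_zpowers_iff.mp (hg ▸ mem_top x)
  obtain ⟨j, rfl⟩ := mem_zpowers_iff.mp (hg ▸ mem_top y)
  exact zpow_mul_comm g i j

section Metacyclic

variable {G : Type*} [Group G]

section Conjugation

variable {a b : G} {r : ℤ}

theorem Subgroup.Normal.exists_odd_conj_eq_zpow (hN : (zpowers a).Normal) (b : G)
    (ha : 2 ∣ orderOf a) : ∃ r : ℤ, Odd r ∧ b * a * b⁻¹ = a ^ r := by
  obtain ⟨r, hr⟩ := mem_zpowers_iff.mp (hN.conj_mem a (mem_zpowers a) b)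
  obtain ⟨k, hk⟩ := mem_zpowers_iff.mp (hN.conj_mem a (mem_zpowers a) b⁻¹)
  refine ⟨r, ?_, hr.symm⟩
  have hrk : a ^ (r * k - 1) = 1 := by
    rw [zpow_sub_one, mul_inv_eq_one, mul_comm, zpow_mul, hk, conj_zpow, hr]
    group
  obtain ⟨d, hd⟩ := (Int.natCast_dvd_natCast.mpr ha).trans (orderOf_dvd_iff_zpow_eq_one.mpr hrk)
  exact (Int.odd_mul.mp (⟨d, by push_cast at hd; linarith⟩ : Odd (r * k))).1

theorem conj_pow_eq_zpow (hr : b * a * b⁻¹ = a ^ r) (t : ℕ) :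
    b ^ t * a * (b ^ t)⁻¹ = a ^ r ^ t := by
  induction t with
  | zero => simp
  | succ t ih =>
    rw [pow_succ', mul_inv_rev,
      show b * b ^ t * a * ((b ^ t)⁻¹ * b⁻¹) = b * (b ^ t * a * (b ^ t)⁻¹) * b⁻¹ by group,
      ih, ← conj_zpow, hr, ← zpow_mul, pow_succ']

theorem pow_mul_zpow_of_conj (hr : b * a * b⁻¹ = a ^ r) (t : ℕ) (z : ℤ) :
    b ^ t * a ^ z = a ^ (z * r ^ t) * b ^ t := by
  rw [← mul_inv_eq_iff_eq_mul, ← conj_zpow, conj_pow_eq_zpow hr, ← zpow_mul, mul_comm]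

theorem zpow_mul_pow_pow (hr : b * a * b⁻¹ = a ^ r) (s : ℤ) (u k : ℕ) :
    (a ^ s * b ^ u) ^ k = a ^ (s * ∑ i ∈ range k, (r ^ u) ^ i) * b ^ (u * k) := by
  induction k with
  | zero => simp
  | succ k ih =>
    rw [pow_succ, ih, mul_assoc, ← mul_assoc (b ^ (u * k)), pow_mul_zpow_of_conj hr,
      sum_range_succ, mul_add, zpow_add, ← pow_mul, mul_add_one u k, pow_add]
    group

theorem commute_pow_of_dvd (hr : b * a * b⁻¹ = a ^ r) {t : ℕ}
    (ht : (orderOf a : ℤ) ∣ r ^ t - 1) : Commute (b ^ t) a := by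
  have hat : a ^ (r ^ t) = a := by
    rwa [← mul_inv_eq_one, ← zpow_sub_one, ← orderOf_dvd_iff_zpow_eq_one]
  have h := pow_mul_zpow_of_conj hr t 1
  rwa [zpow_one, one_mul, hat] at h

theorem orderOf_dvd_mul_geom_sum (hr : b * a * b⁻¹ = a ^ r) {c : ℤ} {j k : ℕ}
    (hx : zpowers (a ^ c * b ^ j) ⊓ zpowers a = ⊥) (hk : b ^ (j * k) = 1) :
    (orderOf a : ℤ) ∣ c * ∑ i ∈ range k, (r ^ j) ^ i := by
  have hpow := zpow_mul_pow_pow hr c j k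
  rw [hk, mul_one] at hpow
  have hmem : (a ^ c * b ^ j) ^ k ∈ zpowers (a ^ c * b ^ j) ⊓ zpowers a :=
    ⟨pow_mem (mem_zpowers _) k, hpow ▸ zpow_mem (mem_zpowers a) _⟩
  rw [hx, mem_bot, hpow] at hmem
  exact orderOf_dvd_iff_zpow_eq_one.mpr hmem

theorem not_dvd_pow_two_pow_sub_one (hr : b * a * b⁻¹ = a ^ r) {m n u : ℕ}
    (ha : orderOf a = 2 ^ m) (hb : orderOf b = 2 ^ (n + 1)) (hu : Odd u)
    (hab : ¬ Commute (b ^ (orderOf b / 2)) a) : ¬ (2 : ℤ) ^ m ∣ (r ^ u) ^ 2 ^ n - 1 := by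
  intro hdvd
  apply hab
  have hbu : b ^ (u * 2 ^ n) = b ^ (orderOf b / 2) := by
    obtain ⟨q, rfl⟩ := hu
    rw [hb, pow_succ, Nat.mul_div_cancel _ two_pos, add_one_mul, pow_add,
      orderOf_dvd_iff_pow_eq_one.mp ⟨q, by rw [hb, pow_succ]; ring⟩, one_mul]
  rw [← hbu]
  apply commute_pow_of_dvd hr
  rw [ha, pow_mul]
  exact_mod_cast hdvd

end Conjugation

/-- `G = ⟨a⟩ ⋊ ⟨b⟩`. -/
structure IsSplitMetacyclic (a b : G) : Prop where
  normal : (zpowers a).Normal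
  sup_eq_top : zpowers a ⊔ zpowers b = ⊤
  inf_eq_bot : zpowers a ⊓ zpowers b = ⊥

def IsAbsolutelySplit (a : G) : Prop :=
  ∀ x : G, zpowers x ⊓ zpowers a = ⊥ →
    ∃ y : G, x ∈ zpowers y ∧ zpowers a ⊔ zpowers y = ⊤ ∧ zpowers a ⊓ zpowers y = ⊥

namespace IsSplitMetacyclic

variable {a b : G} {r : ℤ}

theorem exists_eq_zpow_mul_pow (h : IsSplitMetacyclic a b) (hb : IsOfFinOrder b) (g : G) :
    ∃ (c : ℤ) (j : ℕ), g = a ^ c * b ^ j := by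
  have hg : g ∈ ((zpowers a ⊔ zpowers b : Subgroup G) : Set G) := by simp [h.sup_eq_top]
  have := h.normal
  rw [normal_mul] at hg
  obtain ⟨_, ⟨c, rfl⟩, _, hj, rfl⟩ := hg
  obtain ⟨j, rfl⟩ := hb.mem_powers_iff_mem_zpowers.mpr hj
  exact ⟨c, j, rfl⟩

theorem pow_mem_zpowers_iff (h : IsSplitMetacyclic a b) {j : ℕ} :
    b ^ j ∈ zpowers a ↔ b ^ j = 1 := by
  refine ⟨fun hj => ?_, fun hj => hj ▸ one_mem _⟩
  have : b ^ j ∈ zpowers a ⊓ zpowers b := ⟨hj, pow_mem (mem_zpowers b) j⟩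
  rwa [h.inf_eq_bot, mem_bot] at this

theorem zpow_mul_pow_mem_zpowers_iff (h : IsSplitMetacyclic a b) (c : ℤ) (j : ℕ) :
    a ^ c * b ^ j ∈ zpowers a ↔ b ^ j = 1 := by
  rw [mul_mem_cancel_left (zpow_mem (mem_zpowers a) c), h.pow_mem_zpowers_iff]

theorem ne_one_of_not_commutative (h : IsSplitMetacyclic a b)
    (hG : ¬ ∀ g g' : G, g * g' = g' * g) : a ≠ 1 ∧ b ≠ 1 := by
  have hsup := h.sup_eq_top
  constructor <;> rintro rfl <;> apply hG
  · exact mul_comm_of_zpowers_eq_top (by rwa [zpowers_one_eq_bot, bot_sup_eq] at hsup)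
  · exact mul_comm_of_zpowers_eq_top (by rwa [zpowers_one_eq_bot, sup_bot_eq] at hsup)

theorem mem_center_of_commute (h : IsSplitMetacyclic a b) {z : G} (ha : Commute z a)
    (hb : Commute z b) : z ∈ center G := by
  have hz : zpowers a ⊔ zpowers b ≤ centralizer {z} := by
    rw [sup_le_iff, zpowers_le, zpowers_le, mem_centralizer_singleton_iff,
      mem_centralizer_singleton_iff]
    exact ⟨ha.eq.symm, hb.eq.symm⟩
  rw [h.sup_eq_top, top_le_iff] at hz
  exact mem_center_iff.mpr fun g => mem_centralizer_singleton_iff.mp (hz ▸ mem_top g)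

theorem not_commute_pow_orderOf_div_two [Finite G] [IsCyclic (center G)]
    (h : IsSplitMetacyclic a b) (hr : b * a * b⁻¹ = a ^ r) (hr_odd : Odd r)
    (ha : 2 ∣ orderOf a) (hb : 2 ∣ orderOf b) : ¬ Commute (b ^ (orderOf b / 2)) a := by
  intro hcomm
  set z₁ := b ^ (orderOf b / 2)
  set z₂ := a ^ (orderOf a / 2)
  have hz₁ : orderOf z₁ = 2 := orderOf_pow_orderOf_div (orderOf_pos b).ne' hb
  have hz₂ : orderOf z₂ = 2 := orderOf_pow_orderOf_div (orderOf_pos a).ne' ha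
  have hz₂b : Commute z₂ b := by
    obtain ⟨q, hq⟩ := ha
    obtain ⟨t, rfl⟩ := hr_odd
    have hpow : a ^ ((q : ℤ) * (2 * t + 1) ^ 1) = a ^ (q : ℤ) :=
      zpow_eq_zpow_iff_modEq.mpr (Int.modEq_iff_dvd.mpr ⟨-t, by rw [hq]; push_cast; ring⟩)
    have hconj := pow_mul_zpow_of_conj hr 1 q
    rw [pow_one, hpow, zpow_natCast] at hconj
    simp only [z₂, hq, Nat.mul_div_cancel_left q two_pos]
    exact hconj.symm
  have hc₁ : z₁ ∈ center G := h.mem_center_of_commute hcomm ((Commute.refl b).pow_left _)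
  have hc₂ : z₂ ∈ center G := h.mem_center_of_commute ((Commute.refl a).pow_left _) hz₂b
  have hz : z₁ = z₂ := congrArg Subtype.val <| IsCyclic.eq_of_orderOf_eq_two (x := ⟨z₁, hc₁⟩)
    (y := ⟨z₂, hc₂⟩) (by rwa [orderOf_mk]) (by rwa [orderOf_mk])
  have hz₁a : z₁ ∈ zpowers a := hz ▸ pow_mem (mem_zpowers a) _
  have hz₁1 : z₁ = 1 := h.pow_mem_zpowers_iff.mp hz₁a
  simp [hz₁1] at hz₁

theorem sup_zpowers_zpow_mul_pow_eq_top (h : IsSplitMetacyclic a b) (s : ℤ) {u : ℕ}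
    (hu : u.Coprime (orderOf b)) : zpowers a ⊔ zpowers (a ^ s * b ^ u) = ⊤ := by
  have hbu : b ^ u ∈ zpowers a ⊔ zpowers (a ^ s * b ^ u) := by
    have := mul_mem (inv_mem (mem_sup_left (zpow_mem (mem_zpowers a) s)))
      (mem_sup_right (mem_zpowers (a ^ s * b ^ u)))
    rwa [inv_mul_cancel_left] at this
  have hb : b ∈ zpowers a ⊔ zpowers (a ^ s * b ^ u) :=
    zpowers_le.mpr hbu (mem_zpowers_pow_iff.mpr hu)
  rw [eq_top_iff, ← h.sup_eq_top]
  exact sup_le le_sup_left (zpowers_le.mpr hb)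

theorem inf_zpowers_zpow_mul_pow_eq_bot (h : IsSplitMetacyclic a b) (hr : b * a * b⁻¹ = a ^ r)
    (hb : IsOfFinOrder b) (s : ℤ) {u : ℕ} (hu : u.Coprime (orderOf b))
    (hy : (a ^ s * b ^ u) ^ orderOf b = 1) : zpowers a ⊓ zpowers (a ^ s * b ^ u) = ⊥ := by
  rw [eq_bot_iff]
  rintro g ⟨hga, hgy⟩
  have hy_fin : IsOfFinOrder (a ^ s * b ^ u) :=
    isOfFinOrder_iff_pow_eq_one.mpr ⟨_, hb.orderOf_pos, hy⟩
  obtain ⟨k, rfl⟩ := hy_fin.mem_powers_iff_mem_zpowers.mpr hgy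
  replace hga : (a ^ s * b ^ u) ^ k ∈ zpowers a := hga
  rw [zpow_mul_pow_pow hr, h.zpow_mul_pow_mem_zpowers_iff, ← orderOf_dvd_iff_pow_eq_one] at hga
  exact orderOf_dvd_iff_pow_eq_one.mp
    ((orderOf_dvd_of_pow_eq_one hy).trans (hu.symm.dvd_of_dvd_mul_left hga))

theorem sup_eq_top_and_inf_eq_bot_of_pow_eq (h : IsSplitMetacyclic a b)
    (hr : b * a * b⁻¹ = a ^ r) (hb : IsOfFinOrder b) (s : ℤ) {u : ℕ}
    (hu : u.Coprime (orderOf b)) {x : G} (hx : zpowers x ⊓ zpowers a = ⊥) {k : ℕ}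
    (hk : k ∣ orderOf b) (hyx : (a ^ s * b ^ u) ^ k = x) :
    zpowers a ⊔ zpowers (a ^ s * b ^ u) = ⊤ ∧ zpowers a ⊓ zpowers (a ^ s * b ^ u) = ⊥ := by
  refine ⟨h.sup_zpowers_zpow_mul_pow_eq_top s hu, h.inf_zpowers_zpow_mul_pow_eq_bot hr hb s hu ?_⟩
  obtain ⟨l, hl⟩ := hk
  have hmem : (a ^ s * b ^ u) ^ orderOf b ∈ zpowers x ⊓ zpowers a := by
    refine ⟨by rw [hl, pow_mul, hyx]; exact pow_mem (mem_zpowers x) l, ?_⟩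
    rw [zpow_mul_pow_pow hr, mul_comm u, pow_mul, pow_orderOf_eq_one, one_pow, mul_one]
    exact zpow_mem (mem_zpowers a) _
  rwa [hx, mem_bot] at hmem

theorem isAbsolutelySplit (h : IsSplitMetacyclic a b) (hr : b * a * b⁻¹ = a ^ r)
    (hr_odd : Odd r) {m n : ℕ} (ha : orderOf a = 2 ^ m) (hb : orderOf b = 2 ^ n)
    (hab : ¬ Commute (b ^ (orderOf b / 2)) a) : IsAbsolutelySplit a := by
  intro x hx
  have hb_fin : IsOfFinOrder b := orderOf_pos_iff.mp (hb ▸ pow_pos two_pos n)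
  obtain ⟨c, j, rfl⟩ := h.exists_eq_zpow_mul_pow hb_fin x
  by_cases hbj : b ^ j = 1
  · have hx1 : a ^ c * b ^ j ∈ zpowers (a ^ c * b ^ j) ⊓ zpowers a :=
      ⟨mem_zpowers _, (h.zpow_mul_pow_mem_zpowers_iff c j).mpr hbj⟩
    rw [hx, mem_bot] at hx1
    exact ⟨b, hx1 ▸ one_mem _, h.sup_eq_top, h.inf_eq_bot⟩
  obtain ⟨v, u, hu, rfl⟩ := Nat.exists_eq_two_pow_mul_odd (n := j) (by rintro rfl; simp at hbj)
  have hvn : v < n := by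
    by_contra! hnv
    rw [← orderOf_dvd_iff_pow_eq_one, hb] at hbj
    exact hbj ((pow_dvd_pow 2 hnv).trans (dvd_mul_right _ _))
  have hc : (2 : ℤ) ^ m ∣ c * ∑ i ∈ range (2 ^ (n - v)), ((r ^ u) ^ 2 ^ v) ^ i := by
    have := orderOf_dvd_mul_geom_sum hr hx (k := 2 ^ (n - v)) (by
      rw [← orderOf_dvd_iff_pow_eq_one, hb, mul_right_comm, ← pow_add, Nat.add_sub_cancel' hvn.le]
      exact dvd_mul_right _ _)
    rwa [ha, Nat.cast_pow, Nat.cast_ofNat, mul_comm (2 ^ v) u, pow_mul] at this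
  obtain ⟨n, rfl⟩ : ∃ n', n = n' + 1 := ⟨n - 1, by omega⟩
  obtain ⟨s, hs⟩ := exists_mul_geom_sum_sub_dvd hr_odd.pow hvn
    (not_dvd_pow_two_pow_sub_one hr ha hb hu hab) hc
  have hyx : (a ^ s * b ^ u) ^ 2 ^ v = a ^ c * b ^ (2 ^ v * u) := by
    rw [zpow_mul_pow_pow hr, mul_comm u, zpow_eq_zpow_iff_modEq.mpr]
    rw [ha]
    exact (Int.modEq_iff_dvd.mpr (by exact_mod_cast hs)).symm
  have hu' : u.Coprime (orderOf b) := hb ▸ Nat.Coprime.pow_right _ (Nat.coprime_two_right.mpr hu)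
  obtain ⟨hsup, hinf⟩ := h.sup_eq_top_and_inf_eq_bot_of_pow_eq hr hb_fin s hu' hx
    (hb ▸ pow_dvd_pow 2 hvn.le) hyx
  exact ⟨_, hyx ▸ pow_mem (mem_zpowers _) _, hsup, hinf⟩

end IsSplitMetacyclic

end Metacyclic

/-- Let `G` be a non-abelian split metacyclic `2`-group with cyclic center. Then `G`
is absolutely split: there is a normal cyclic subgroup `⟨a⟩` with a cyclic
complement such that for every `x ∈ G` with `⟨x⟩ ∩ ⟨a⟩ = 1` there is `y ∈ G` with
`x ∈ ⟨y⟩` and `G = ⟨a⟩ ⋊ ⟨y⟩`. -/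
theorem stmt_12 (G : Type*) [Group G] [Finite G]
    (hp : IsPGroup 2 G)
    (hna : ¬ ∀ g h : G, g * h = h * g)
    (hsplit : ∃ a b : G, (Subgroup.zpowers a).Normal ∧
      Subgroup.zpowers a ⊔ Subgroup.zpowers b = ⊤ ∧
      Subgroup.zpowers a ⊓ Subgroup.zpowers b = ⊥)
    (hZ : IsCyclic (Subgroup.center G)) :
    ∃ a b : G, (Subgroup.zpowers a).Normal ∧
      Subgroup.zpowers a ⊔ Subgroup.zpowers b = ⊤ ∧
      Subgroup.zpowers a ⊓ Subgroup.zpowers b = ⊥ ∧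
      ∀ x : G, Subgroup.zpowers x ⊓ Subgroup.zpowers a = ⊥ →
        ∃ y : G, x ∈ Subgroup.zpowers y ∧
          Subgroup.zpowers a ⊔ Subgroup.zpowers y = ⊤ ∧
          Subgroup.zpowers a ⊓ Subgroup.zpowers y = ⊥ := by
  have : Fact (Nat.Prime 2) := ⟨Nat.prime_two⟩
  obtain ⟨a, b, hN, hsup, hinf⟩ := hsplit
  have h : IsSplitMetacyclic a b := ⟨hN, hsup, hinf⟩
  obtain ⟨m, ha⟩ := IsPGroup.iff_orderOf.mp hp a
  obtain ⟨n, hb⟩ := IsPGroup.iff_orderOf.mp hp b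
  obtain ⟨ha1, hb1⟩ := h.ne_one_of_not_commutative hna
  have ha2 := hp.dvd_orderOf ha1
  obtain ⟨r, hr_odd, hr⟩ := hN.exists_odd_conj_eq_zpow b ha2
  exact ⟨a, b, hN, hsup, hinf, h.isAbsolutelySplit hr hr_odd ha hb
    (h.not_commute_pow_orderOf_div_two hr hr_odd ha2 (hp.dvd_orderOf hb1))⟩
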